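/- arXiv:2404.13832 — 2 statements merged into one kernel-verified Lean document; each statement's English description precedes it below -/
import Mathlib

section
/- For every compact set K ⊆ ℝ² there exists h₀ = h₀(K) > 0 such that for all h > h₀ and all p = (x,y) ∈ K, the symmetric 2×2 matrix [[a, b],[b, c]] with a = −m Σ_{i=1}^n d_i(p,h)^{−(m+2)} (1 − (m+2)(x − x_i)²/d_i(p,h)²), b = m(m+2) Σ_{i=1}^n (x − x_i)(y − y_i)/d_i(p,h)^{m+4}, c = −m Σ_{i=1}^n d_i(p,h)^{−(m+2)} (1 − (m+2)(y − y_i)²/d_i(p,h)²) — that is, the Hessian matrix of f(·,h) at p — is negative definite. -/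
open Real Finset

/-- Distance from `q ∈ ℝ²` (at height `h`) to the point `(xi, yi)` in the base plane. -/
noncomputable def distPt (xi yi h : ℝ) (q : ℝ × ℝ) : ℝ :=
  Real.sqrt ((q.1 - xi) ^ 2 + (q.2 - yi) ^ 2 + h ^ 2)

/-- The objective functional `f(q, h) = ∑ i, d_i(q,h)^(-m)`. -/
noncomputable def fEnergy {N : ℕ} (X Y : Fin N → ℝ) (m h : ℝ) (q : ℝ × ℝ) : ℝ :=
  ∑ i, distPt (X i) (Y i) h q ^ (-m)

/-- First component of the gradient `F = ∇f`. -/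
noncomputable def F1 {N : ℕ} (X Y : Fin N → ℝ) (m h : ℝ) (q : ℝ × ℝ) : ℝ :=
  -m * ∑ i, (q.1 - X i) / distPt (X i) (Y i) h q ^ (m + 2)

/-- Second component of the gradient `F = ∇f`. -/
noncomputable def F2 {N : ℕ} (X Y : Fin N → ℝ) (m h : ℝ) (q : ℝ × ℝ) : ℝ :=
  -m * ∑ i, (q.2 - Y i) / distPt (X i) (Y i) h q ^ (m + 2)

/-- Entry `a` (the `∂²f/∂x²` entry) of the Hessian matrix of `f(·,h)`. -/
noncomputable def hessA {N : ℕ} (X Y : Fin N → ℝ) (m h : ℝ) (p : ℝ × ℝ) : ℝ :=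
  -m * ∑ i, (1 / distPt (X i) (Y i) h p ^ (m + 2)) *
    (1 - (m + 2) * (p.1 - X i) ^ 2 / distPt (X i) (Y i) h p ^ 2)

/-- Entry `b` (the mixed `∂²f/∂x∂y` entry) of the Hessian matrix of `f(·,h)`. -/
noncomputable def hessB {N : ℕ} (X Y : Fin N → ℝ) (m h : ℝ) (p : ℝ × ℝ) : ℝ :=
  m * (m + 2) * ∑ i, (p.1 - X i) * (p.2 - Y i) / distPt (X i) (Y i) h p ^ (m + 4)

/-- Entry `c` (the `∂²f/∂y²` entry) of the Hessian matrix of `f(·,h)`. -/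
noncomputable def hessC {N : ℕ} (X Y : Fin N → ℝ) (m h : ℝ) (p : ℝ × ℝ) : ℝ :=
  -m * ∑ i, (1 / distPt (X i) (Y i) h p ^ (m + 2)) *
    (1 - (m + 2) * (p.2 - Y i) ^ 2 / distPt (X i) (Y i) h p ^ 2)

/-! The quadratic form of `-Hess f(·,h)` at `p` in direction `v` is
`m ∑ᵢ dᵢ^{-(m+2)} (|v|² - (m+2) ⟨v, p - xᵢ⟩² / dᵢ²)`. By Cauchy–Schwarz every summand is positive
once `(m+2) |p - xᵢ|² < dᵢ² = |p - xᵢ|² + h²`, and on a compact set this holds for all large `h`. -/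

theorem Matrix.posDef_fin_two_of_quadratic_pos {a b c : ℝ}
    (h : ∀ u w : ℝ, 0 < u ^ 2 + w ^ 2 → 0 < a * u ^ 2 + 2 * b * u * w + c * w ^ 2) :
    (!![a, b; b, c]).PosDef := by
  rw [Matrix.posDef_iff_dotProduct_mulVec]
  refine ⟨?_, fun v hv => ?_⟩
  · ext i j
    fin_cases i <;> fin_cases j <;> rfl
  · have hv' : 0 < v 0 ^ 2 + v 1 ^ 2 := by
      by_contra! hle
      refine hv (funext fun i => ?_)
      fin_cases i <;> simp <;> nlinarith [sq_nonneg (v 0), sq_nonneg (v 1)]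
    have hquad : star v ⬝ᵥ (Matrix.mulVec !![a, b; b, c] v) =
        a * v 0 ^ 2 + 2 * b * v 0 * v 1 + c * v 1 ^ 2 := by
      simp [Matrix.mulVec, dotProduct, Fin.sum_univ_two]
      ring
    exact hquad ▸ h (v 0) (v 1) hv'

theorem sub_div_sq_inner_pos {k a b u w D : ℝ} (hk : 0 ≤ k) (hD : k * (a ^ 2 + b ^ 2) < D)
    (huw : 0 < u ^ 2 + w ^ 2) : 0 < u ^ 2 + w ^ 2 - k * (u * a + w * b) ^ 2 / D := by
  have hD0 : 0 < D := by nlinarith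
  have cauchySchwarz : (u * a + w * b) ^ 2 ≤ (u ^ 2 + w ^ 2) * (a ^ 2 + b ^ 2) := by
    nlinarith [sq_nonneg (u * b - w * a)]
  rw [sub_pos, div_lt_iff₀ hD0]
  nlinarith [mul_le_mul_of_nonneg_left cauchySchwarz hk, mul_lt_mul_of_pos_left hD huw]

theorem sq_distPt (xi yi h : ℝ) (q : ℝ × ℝ) :
    distPt xi yi h q ^ 2 = (q.1 - xi) ^ 2 + (q.2 - yi) ^ 2 + h ^ 2 :=
  Real.sq_sqrt (by positivity)

theorem distPt_pos (xi yi : ℝ) {h : ℝ} (hh : h ≠ 0) (q : ℝ × ℝ) : 0 < distPt xi yi h q :=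
  Real.sqrt_pos.mpr (by positivity)

theorem IsCompact.exists_sq_dist_le {ι : Type*} [Fintype ι] (X Y : ι → ℝ) {K : Set (ℝ × ℝ)}
    (hK : IsCompact K) : ∃ C, ∀ p ∈ K, ∀ i, (p.1 - X i) ^ 2 + (p.2 - Y i) ^ 2 ≤ C := by
  obtain ⟨C, hC⟩ := hK.bddAbove_image
    (f := fun p => ∑ i, ((p.1 - X i) ^ 2 + (p.2 - Y i) ^ 2)) (by fun_prop)
  refine ⟨C, fun p hp i => le_trans ?_ (hC ⟨p, hp, rfl⟩)⟩
  exact Finset.single_le_sum (f := fun i => (p.1 - X i) ^ 2 + (p.2 - Y i) ^ 2)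
    (fun _ _ => by positivity) (Finset.mem_univ i)

section Hessian

variable {N : ℕ} (X Y : Fin N → ℝ) (m : ℝ) {h : ℝ} (p : ℝ × ℝ)

theorem neg_hess_quadratic_eq (hh : h ≠ 0) (u w : ℝ) :
    -hessA X Y m h p * u ^ 2 + 2 * -hessB X Y m h p * u * w + -hessC X Y m h p * w ^ 2 =
      m * ∑ i, (u ^ 2 + w ^ 2 - (m + 2) * (u * (p.1 - X i) + w * (p.2 - Y i)) ^ 2 /
        distPt (X i) (Y i) h p ^ 2) / distPt (X i) (Y i) h p ^ (m + 2) := by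
  simp only [hessA, hessB, hessC, Finset.mul_sum, Finset.sum_mul, neg_mul, neg_neg,
    ← Finset.sum_neg_distrib]
  rw [← Finset.sum_add_distrib, ← Finset.sum_add_distrib]
  refine Finset.sum_congr rfl fun i _ => ?_
  have hd := distPt_pos (X i) (Y i) hh p
  have hpow := (Real.rpow_pos_of_pos hd (m + 2)).ne'
  rw [show m + 4 = m + 2 + (2 : ℕ) by push_cast; ring, Real.rpow_add_natCast hd.ne']
  field_simp
  ring

theorem neg_hessian_posDef_of_sq_dist_lt [NeZero N] (hm : 0 < m) (hh : h ≠ 0)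
    (hclose : ∀ i, (m + 2) * ((p.1 - X i) ^ 2 + (p.2 - Y i) ^ 2) < h ^ 2) :
    (-(!![hessA X Y m h p, hessB X Y m h p; hessB X Y m h p, hessC X Y m h p])).PosDef := by
  have hneg : -(!![hessA X Y m h p, hessB X Y m h p; hessB X Y m h p, hessC X Y m h p]) =
      !![-hessA X Y m h p, -hessB X Y m h p; -hessB X Y m h p, -hessC X Y m h p] := by
    ext i j
    fin_cases i <;> fin_cases j <;> rfl
  rw [hneg]
  refine Matrix.posDef_fin_two_of_quadratic_pos fun u w huw => ?_
  rw [neg_hess_quadratic_eq X Y m p hh]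
  refine mul_pos hm (Finset.sum_pos (fun i _ => div_pos ?_ ?_) Finset.univ_nonempty)
  · refine sub_div_sq_inner_pos (by linarith) ?_ huw
    rw [sq_distPt]
    nlinarith [hclose i, sq_nonneg (p.1 - X i), sq_nonneg (p.2 - Y i)]
  · exact Real.rpow_pos_of_pos (distPt_pos (X i) (Y i) hh p) _

end Hessian

/-- for every compact `K ⊆ ℝ²` there is `h₀ > 0` such that for all
`h > h₀` and all `p ∈ K` the Hessian matrix `[[a,b],[b,c]]` of `f(·,h)` at `p` is
negative definite (i.e. its negation is positive definite). -/
theorem hessian_negative_definite_for_large_height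
    (n : ℕ) (X Y : Fin (n + 1) → ℝ) (m : ℝ) (hm : 3 < m ∧ m < 4)
    (K : Set (ℝ × ℝ)) (hK : IsCompact K) :
    ∃ h₀ > (0 : ℝ), ∀ h > h₀, ∀ p ∈ K,
      (-(!![hessA X Y m h p, hessB X Y m h p;
            hessB X Y m h p, hessC X Y m h p])).PosDef := by
  have hm0 : 0 < m := by linarith [hm.1]
  obtain ⟨C, hC⟩ := hK.exists_sq_dist_le X Y
  refine ⟨(m + 2) * |C| + 1, by positivity, fun h hh p hp => ?_⟩
  have hC_le : (m + 2) * C ≤ (m + 2) * |C| := by gcongr; exact le_abs_self C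
  have h_gt_one : 1 < h := by nlinarith [abs_nonneg C]
  have hC_lt : (m + 2) * C < h ^ 2 := by nlinarith
  refine neg_hessian_posDef_of_sq_dist_lt X Y m p hm0 (by linarith : (0 : ℝ) < h).ne' fun i => ?_
  nlinarith [hC p hp i]
end

section
/- There exists h₀ > 0 such that for every h > h₀ the function f(·,h) is strictly concave on the rectangle R = [min_i x_i, max_i x_i] × [min_i y_i, max_i y_i]; that is, for any distinct p, q ∈ R and any t ∈ (0,1), f(t·p + (1−t)·q, h) > t·f(p,h) + (1−t)·f(q,h). -/
open Real Finset

/-- Membership in the rectangle `R = [min_i x_i, max_i x_i] × [min_i y_i, max_i y_i]`. -/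
noncomputable def inRect {N : ℕ} (X Y : Fin (N + 1) → ℝ) (p : ℝ × ℝ) : Prop :=
  Finset.univ.inf' Finset.univ_nonempty X ≤ p.1 ∧
  p.1 ≤ Finset.univ.sup' Finset.univ_nonempty X ∧
  Finset.univ.inf' Finset.univ_nonempty Y ≤ p.2 ∧
  p.2 ≤ Finset.univ.sup' Finset.univ_nonempty Y

/-! Write `p = -m/2` and `v = q - xᵢ`, so that each summand of `f(·,h)` is `(‖v‖² + h²)^p`.
Along a line `v + t•u` its second derivative is `p S^(p-2) (2‖u‖² S + 4(p-1)⟪v,u⟫²)` with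
`S = ‖v‖² + h²`, and by Cauchy–Schwarz the bracket is at least `2‖u‖² (h² - (1-2p)‖v‖²)`.
Hence each summand is strictly concave on the ball around `xᵢ` of radius `h/√(m+1)`, which
contains the rectangle once `h` is large, and the sum of the summands inherits strict concavity. -/

open Set Metric WithLp

theorem strictConcaveOn_of_forall_segment {E : Type*} [AddCommGroup E] [Module ℝ E]
    {s : Set E} {f : E → ℝ} (hs : Convex ℝ s)
    (hf : ∀ x ∈ s, ∀ y ∈ s, x ≠ y →
      StrictConcaveOn ℝ (Icc 0 1) fun t : ℝ => f (x + t • (y - x))) :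
    StrictConcaveOn ℝ s f := by
  refine ⟨hs, fun x hx y hy hxy a b ha hb hab => ?_⟩
  have h := (hf x hx y hy hxy).2 (left_mem_Icc.2 zero_le_one) (right_mem_Icc.2 zero_le_one)
    zero_ne_one ha hb hab
  obtain rfl : a = 1 - b := by linarith
  simpa [sub_smul, smul_sub, ← add_sub_assoc, add_sub_right_comm] using h

section
variable {E : Type*} [NormedAddCommGroup E] [InnerProductSpace ℝ E]

theorem hasDerivAt_rpow_normSq_line (c u : E) {k : ℝ} (hk : 0 < k) (p t : ℝ) :
    HasDerivAt (fun t : ℝ => (‖c + t • u‖ ^ 2 + k) ^ p)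
      (p * (‖c + t • u‖ ^ 2 + k) ^ (p - 1) * (2 * inner ℝ (c + t • u) u)) t := by
  have hline : HasDerivAt (fun t : ℝ => c + t • u) u t := by
    simpa using ((hasDerivAt_id t).smul_const u).const_add c
  convert (hline.norm_sq.add_const k).rpow_const (p := p) (Or.inl (by positivity)) using 1
  ring

theorem hasDerivAt_deriv_rpow_normSq_line (c u : E) {k : ℝ} (hk : 0 < k) (p t : ℝ) :
    HasDerivAt (fun t : ℝ => p * (‖c + t • u‖ ^ 2 + k) ^ (p - 1) * (2 * inner ℝ (c + t • u) u))
      (p * (p - 1) * (‖c + t • u‖ ^ 2 + k) ^ (p - 2) * (2 * inner ℝ (c + t • u) u) ^ 2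
        + 2 * p * (‖c + t • u‖ ^ 2 + k) ^ (p - 1) * ‖u‖ ^ 2) t := by
  have hline : HasDerivAt (fun t : ℝ => c + t • u) u t := by
    simpa using ((hasDerivAt_id t).smul_const u).const_add c
  have hpow := (hasDerivAt_rpow_normSq_line c u hk (p - 1) t).const_mul p
  have hinner := (hline.inner ℝ (hasDerivAt_const t u)).const_mul 2
  refine (hpow.mul hinner).congr_deriv ?_
  rw [sub_sub, one_add_one_eq_two, inner_zero_right, real_inner_self_eq_norm_sq]
  ring

theorem rpow_normSq_second_deriv_neg {v u : E} {p k : ℝ} (hp : p < 0) (hu : u ≠ 0)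
    (hv : (1 - 2 * p) * ‖v‖ ^ 2 < k) :
    p * (p - 1) * (‖v‖ ^ 2 + k) ^ (p - 2) * (2 * inner ℝ v u) ^ 2
      + 2 * p * (‖v‖ ^ 2 + k) ^ (p - 1) * ‖u‖ ^ 2 < 0 := by
  have hS : 0 < ‖v‖ ^ 2 + k := by nlinarith [sq_nonneg ‖v‖]
  have hsplit : (‖v‖ ^ 2 + k) ^ (p - 1) = (‖v‖ ^ 2 + k) ^ (p - 2) * (‖v‖ ^ 2 + k) := by
    rw [← rpow_add_one hS.ne']
    ring_nf
  have hCS : inner ℝ v u ^ 2 ≤ ‖v‖ ^ 2 * ‖u‖ ^ 2 := by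
    rw [← mul_pow, ← sq_abs]
    exact pow_le_pow_left₀ (abs_nonneg _) (abs_real_inner_le_norm v u) 2
  have hbracket : 0 < 4 * (p - 1) * inner ℝ v u ^ 2 + 2 * (‖v‖ ^ 2 + k) * ‖u‖ ^ 2 := by
    have hu2 : 0 < ‖u‖ ^ 2 := by positivity
    nlinarith [mul_pos hu2 (by linarith : 0 < k - (1 - 2 * p) * ‖v‖ ^ 2)]
  rw [hsplit]
  nlinarith [mul_neg_of_neg_of_pos hp (rpow_pos_of_pos hS (p - 2))]

theorem strictConcaveOn_rpow_normSq_sub_add (c : E) {p k r : ℝ} (hp : p < 0)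
    (hr : (1 - 2 * p) * r ^ 2 < k) :
    StrictConcaveOn ℝ (closedBall c r) fun v => (‖v - c‖ ^ 2 + k) ^ p := by
  have hk : 0 < k := by nlinarith [sq_nonneg r]
  refine strictConcaveOn_of_forall_segment (convex_closedBall c r) fun x hx y hy hxy => ?_
  have hline : (fun t : ℝ => (‖x + t • (y - x) - c‖ ^ 2 + k) ^ p)
      = fun t : ℝ => (‖(x - c) + t • (y - x)‖ ^ 2 + k) ^ p := by
    ext t; rw [sub_add_eq_add_sub]
  rw [hline]
  refine strictConcaveOn_of_deriv2_neg (convex_Icc 0 1)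
    (fun t _ => (hasDerivAt_rpow_normSq_line _ _ hk p t).continuousAt.continuousWithinAt)
    fun t ht => ?_
  rw [interior_Icc] at ht
  have hderiv := funext fun t => (hasDerivAt_rpow_normSq_line (x - c) (y - x) hk p t).deriv
  rw [Function.iterate_succ_apply, Function.iterate_one, hderiv,
    (hasDerivAt_deriv_rpow_normSq_line _ _ hk p t).deriv]
  refine rpow_normSq_second_deriv_neg hp (sub_ne_zero.2 hxy.symm) ?_
  have hmem := (convex_closedBall c r).add_smul_sub_mem hx hy (Ioo_subset_Icc_self ht)
  rw [mem_closedBall_iff_norm] at hmem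
  rw [sub_add_eq_add_sub]
  calc (1 - 2 * p) * ‖x + t • (y - x) - c‖ ^ 2 ≤ (1 - 2 * p) * r ^ 2 := by
        gcongr
        linarith
    _ < k := hr

end

-- `ℝ × ℝ` carries the sup norm; the Euclidean distances `dᵢ` live in `WithLp 2 (ℝ × ℝ)`.
theorem norm_toLp_sq (z : ℝ × ℝ) : ‖toLp 2 z‖ ^ 2 = z.1 ^ 2 + z.2 ^ 2 := by
  rw [prod_norm_sq_eq_of_L2, toLp_fst, toLp_snd, norm_eq_abs, norm_eq_abs, sq_abs, sq_abs]

theorem distPt_rpow_neg (xi yi h m : ℝ) (q : ℝ × ℝ) :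
    distPt xi yi h q ^ (-m) = (‖toLp 2 q - toLp 2 (xi, yi)‖ ^ 2 + h ^ 2) ^ (-(m / 2)) := by
  rw [distPt, ← toLp_sub, norm_toLp_sq, Prod.fst_sub, Prod.snd_sub, sqrt_eq_rpow,
    ← rpow_mul (by positivity)]
  ring_nf

theorem inRect.toLp_mem_closedBall {n : ℕ} {X Y : Fin (n + 1) → ℝ} {p : ℝ × ℝ}
    (hp : inRect X Y p) (i : Fin (n + 1)) :
    toLp 2 p ∈ closedBall (toLp 2 (X i, Y i))
      √((univ.sup' univ_nonempty X - univ.inf' univ_nonempty X) ^ 2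
        + (univ.sup' univ_nonempty Y - univ.inf' univ_nonempty Y) ^ 2) := by
  obtain ⟨hx₁, hx₂, hy₁, hy₂⟩ := hp
  have := inf'_le X (mem_univ i)
  have := le_sup' X (mem_univ i)
  have := inf'_le Y (mem_univ i)
  have := le_sup' Y (mem_univ i)
  rw [mem_closedBall_iff_norm, ← toLp_sub]
  refine le_sqrt_of_sq_le ?_
  rw [norm_toLp_sq, Prod.fst_sub, Prod.snd_sub]
  exact add_le_add (sq_le_sq' (by linarith) (by linarith)) (sq_le_sq' (by linarith) (by linarith))

/-- there is `h₀ > 0` such that for every `h > h₀` the function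
`f(·,h)` is strictly concave on the rectangle `R`: for distinct `p, q ∈ R` and
`t ∈ (0,1)`, `f(t·p + (1-t)·q, h) > t·f(p,h) + (1-t)·f(q,h)`. -/
theorem strictly_concave_on_rectangle_for_large_height
    (n : ℕ) (X Y : Fin (n + 1) → ℝ) (m : ℝ) (hm : 3 < m ∧ m < 4) :
    ∃ h₀ > (0 : ℝ), ∀ h > h₀,
      ∀ p q : ℝ × ℝ, inRect X Y p → inRect X Y q → p ≠ q →
        ∀ t : ℝ, 0 < t → t < 1 →
          t * fEnergy X Y m h p + (1 - t) * fEnergy X Y m h q <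
            fEnergy X Y m h (t • p + (1 - t) • q) := by
  set D := (univ.sup' univ_nonempty X - univ.inf' univ_nonempty X) ^ 2
    + (univ.sup' univ_nonempty Y - univ.inf' univ_nonempty Y) ^ 2
  refine ⟨√((m + 1) * D) + 1, by positivity, fun h hh p q hp hq hpq t ht₀ ht₁ => ?_⟩
  have hD : (1 - 2 * -(m / 2)) * √D ^ 2 < h ^ 2 := by
    have hh₀ : 0 < h := by linarith [sqrt_nonneg ((m + 1) * D)]
    rw [sq_sqrt (by positivity), show 1 - 2 * -(m / 2) = m + 1 by ring, ← sqrt_lt' hh₀]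
    linarith
  have hconc i := strictConcaveOn_rpow_normSq_sub_add (toLp 2 (X i, Y i))
    (by linarith [hm.1]) hD
  simp only [fEnergy, distPt_rpow_neg, mul_sum, ← sum_add_distrib, toLp_add, toLp_smul]
  refine sum_lt_sum_of_nonempty univ_nonempty fun i _ => ?_
  exact (hconc i).2 (hp.toLp_mem_closedBall i) (hq.toLp_mem_closedBall i)
    ((toLp_injective 2).ne hpq) ht₀ (by linarith) (by ring)
end
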